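/- arXiv:1606.03587 — 4 statements merged into one kernel-verified Lean document; each statement's English description precedes it below -/
import Mathlib

section
/- Let R be a (possibly noncommutative) ring, let n ≥ 1, let A = (a₁,…,aₙ) be a row vector over R, let B be an n×n matrix over R, and let C = (c₁,…,cₙ)ᵗ be a column vector over R. Consider the complex of modules 0 → R → Rⁿ → Rⁿ → R → 0 whose maps are r ↦ (cᵢ·r)ᵢ, v ↦ B·v (matrix–vector product over R), and v ↦ ∑ⱼ aⱼ·vⱼ. Assume the row–matrix product A·B is zero, the matrix–column product B·C is zero, and that a₁ and c₁ are units of R. Let B' be the (n−1)×(n−1) submatrix of B obtained by deleting the first row and the first column of B. Then B' has a two-sided inverse over R if and only if the complex is acyclic, i.e.: the map r ↦ (cᵢ·r)ᵢ is injective, the kernel of v ↦ B·v equals the image of r ↦ (cᵢ·r)ᵢ, the kernel of v ↦ ∑ⱼ aⱼ·vⱼ equals the image of v ↦ B·v, and the map v ↦ ∑ⱼ aⱼ·vⱼ is surjective. -/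
/-!
Split `Rⁿ⁺¹` into the first coordinate and the tail. As `c₁` is a unit, every vector is
`C r` plus a vector `(0, y)`, and `B` kills `C r`; as `a₁` is a unit, a vector of `ker A` is
determined by its tail. Since `B (0, y)` lies in `ker A` and has tail `B' y`, exactness at the
source of `B` amounts to injectivity of `B'`, and exactness at its target to surjectivity of
`B'`. The outer maps are injective and surjective because `c₁` and `a₁` are units, and a square
matrix over any ring whose `mulVec` is bijective has a two-sided inverse.
-/

namespace Matrix

theorem exists_mul_eq_one_and_mul_eq_one_iff_bijective_mulVec {m R : Type*} [Fintype m]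
    [DecidableEq m] [Semiring R] {M : Matrix m m R} :
    (∃ D, M * D = 1 ∧ D * M = 1) ↔ Function.Bijective M.mulVec := by
  constructor
  · rintro ⟨D, hMD, hDM⟩
    refine ⟨Function.LeftInverse.injective (g := D.mulVec) fun x => ?_,
      mulVec_surjective_iff_exists_right_inverse.2 ⟨D, hMD⟩⟩
    rw [mulVec_mulVec, hDM, one_mulVec]
  · rintro ⟨hinj, hsurj⟩
    obtain ⟨D, hMD⟩ := mulVec_surjective_iff_exists_right_inverse.1 hsurj
    refine ⟨D, hMD, isLeftRegular_iff_mulVec_injective.2 hinj ?_⟩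
    simp only [← Matrix.mul_assoc, hMD, Matrix.one_mul, Matrix.mul_one]

section Ring

variable {R : Type*} [Ring R]

section General

variable {m k : Type*} [Fintype k]

theorem mulVec_injective_iff_forall_mulVec_eq_zero {M : Matrix m k R} :
    Function.Injective M.mulVec ↔ ∀ y, M *ᵥ y = 0 → y = 0 :=
  injective_iff_map_eq_zero (AddMonoidHom.mk' M.mulVec M.mulVec_add)

theorem mulVec_mul_right_eq_zero {B : Matrix m k R} {C : k → R} (hBC : B *ᵥ C = 0) (r : R) :
    B *ᵥ (fun i => C i * r) = 0 := by
  ext i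
  simpa only [mulVec, dotProduct, ← mul_assoc, ← Finset.sum_mul, Pi.zero_apply, zero_mul] using
    congrArg (· * r) (congrFun hBC i)

theorem dotProduct_mulVec_eq_zero [Fintype m] {A : m → R} {B : Matrix m k R}
    (hAB : A ᵥ* B = 0) (v : k → R) : A ⬝ᵥ (B *ᵥ v) = 0 := by
  rw [dotProduct_mulVec, hAB, zero_dotProduct]

end General

variable {n : ℕ}

theorem vecTail_mulVec_vecCons_zero (B : Matrix (Fin (n + 1)) (Fin (n + 1)) R) (y : Fin n → R) :
    vecTail (B *ᵥ vecCons 0 y) = B.submatrix Fin.succ Fin.succ *ᵥ y := by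
  ext i
  simp [mulVec, dotProduct, Fin.sum_univ_succ, vecTail]

theorem eq_of_dotProduct_eq_of_vecTail_eq {A v w : Fin (n + 1) → R} (ha : IsUnit (A 0))
    (h : A ⬝ᵥ v = A ⬝ᵥ w) (ht : vecTail v = vecTail w) : v = w := by
  rw [← cons_head_tail v, ← cons_head_tail w, dotProduct_cons, dotProduct_cons, ht] at h
  rw [← cons_head_tail v, ← cons_head_tail w, ht, ha.mul_left_cancel (add_right_cancel h)]

theorem exists_dotProduct_eq_and_vecTail_eq {A : Fin (n + 1) → R} (ha : IsUnit (A 0)) (r : R)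
    (y : Fin n → R) : ∃ v, A ⬝ᵥ v = r ∧ vecTail v = y :=
  ⟨vecCons (↑ha.unit⁻¹ * (r - vecTail A ⬝ᵥ y)) y, by
    simp [dotProduct_cons, vecHead, ← mul_assoc], tail_cons _ _⟩

theorem exists_eq_mul_right_add_vecCons_zero {C : Fin (n + 1) → R} (hc : IsUnit (C 0))
    (v : Fin (n + 1) → R) : ∃ r y, v = (fun i => C i * r) + vecCons 0 y := by
  set u := v - fun i => C i * (↑hc.unit⁻¹ * v 0)
  have hu : vecHead u = 0 := by simp [u, vecHead, ← mul_assoc]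
  refine ⟨↑hc.unit⁻¹ * v 0, vecTail u, ?_⟩
  rw [← hu, cons_head_tail, add_sub_cancel]

variable {A C : Fin (n + 1) → R} {B : Matrix (Fin (n + 1)) (Fin (n + 1)) R}

theorem mulVec_vecCons_zero_eq_zero_iff (hAB : A ᵥ* B = 0) (ha : IsUnit (A 0)) (y : Fin n → R) :
    B *ᵥ vecCons 0 y = 0 ↔ B.submatrix Fin.succ Fin.succ *ᵥ y = 0 := by
  rw [← vecTail_mulVec_vecCons_zero]
  refine ⟨fun h => by rw [h]; rfl, fun h => eq_of_dotProduct_eq_of_vecTail_eq ha ?_ h⟩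
  rw [dotProduct_mulVec_eq_zero hAB, dotProduct_zero]

theorem ker_mulVec_eq_range_iff_injective_submatrix (hAB : A ᵥ* B = 0) (hBC : B *ᵥ C = 0)
    (ha : IsUnit (A 0)) (hc : IsUnit (C 0)) :
    {v | B *ᵥ v = 0} = Set.range (fun r : R => fun i => C i * r) ↔
      Function.Injective (B.submatrix Fin.succ Fin.succ).mulVec := by
  rw [mulVec_injective_iff_forall_mulVec_eq_zero]
  constructor
  · intro hker y hy
    obtain ⟨r, hr⟩ : vecCons 0 y ∈ Set.range (fun r : R => fun i => C i * r) :=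
      hker ▸ (mulVec_vecCons_zero_eq_zero_iff hAB ha y).2 hy
    obtain rfl : r = 0 := hc.mul_left_cancel (by simpa using congrFun hr 0)
    funext i
    simpa [eq_comm] using congrFun hr i.succ
  · intro hinj
    ext v
    refine ⟨fun (hv : B *ᵥ v = 0) => ?_,
      by rintro ⟨r, rfl⟩; exact mulVec_mul_right_eq_zero hBC r⟩
    obtain ⟨r, y, rfl⟩ := exists_eq_mul_right_add_vecCons_zero hc v
    rw [mulVec_add, mulVec_mul_right_eq_zero hBC, zero_add,
      mulVec_vecCons_zero_eq_zero_iff hAB ha] at hv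
    exact ⟨r, by rw [hinj y hv, cons_zero_zero, add_zero]⟩

theorem ker_dotProduct_eq_range_iff_surjective_submatrix (hAB : A ᵥ* B = 0)
    (hBC : B *ᵥ C = 0) (ha : IsUnit (A 0)) (hc : IsUnit (C 0)) :
    {v | A ⬝ᵥ v = 0} = Set.range B.mulVec ↔
      Function.Surjective (B.submatrix Fin.succ Fin.succ).mulVec := by
  constructor
  · intro hker y
    obtain ⟨v, hv, rfl⟩ := exists_dotProduct_eq_and_vecTail_eq ha 0 y
    obtain ⟨u, rfl⟩ : v ∈ Set.range B.mulVec := hker ▸ hv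
    obtain ⟨r, z, rfl⟩ := exists_eq_mul_right_add_vecCons_zero hc u
    refine ⟨z, ?_⟩
    rw [← vecTail_mulVec_vecCons_zero, mulVec_add, mulVec_mul_right_eq_zero hBC, zero_add]
  · intro hsurj
    ext v
    refine ⟨fun hv => ?_, by rintro ⟨u, rfl⟩; exact dotProduct_mulVec_eq_zero hAB u⟩
    obtain ⟨z, hz⟩ := hsurj (vecTail v)
    refine ⟨vecCons 0 z, eq_of_dotProduct_eq_of_vecTail_eq ha ?_ ?_⟩
    · rw [dotProduct_mulVec_eq_zero hAB, hv]
    · rw [vecTail_mulVec_vecCons_zero, hz]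

end Ring

end Matrix

/-- Lemma 2.3 of the paper, equivalence (1) ⟺ (2).  Let `R` be a ring, `n ≥ 1`, and let
`0 → R → Rⁿ → Rⁿ → R → 0` be a complex whose maps are given by a column vector `C`,
an `n × n` matrix `B` and a row vector `A`, with `a₁` and `c₁` units.  Then the submatrix
`B'` of `B` obtained by deleting the first row and column is invertible (has a two-sided
inverse) if and only if the complex is acyclic. -/
theorem submatrix_invertible_iff_acyclic (R : Type*) [Ring R] (n : ℕ)
    (A : Fin (n + 1) → R) (B : Matrix (Fin (n + 1)) (Fin (n + 1)) R) (C : Fin (n + 1) → R)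
    (hAB : ∀ j, ∑ i, A i * B i j = 0)
    (hBC : B.mulVec C = 0)
    (ha : IsUnit (A 0)) (hc : IsUnit (C 0)) :
    (∃ D : Matrix (Fin n) (Fin n) R,
        B.submatrix Fin.succ Fin.succ * D = 1 ∧ D * B.submatrix Fin.succ Fin.succ = 1) ↔
      (Function.Injective (fun r : R => fun i : Fin (n + 1) => C i * r) ∧
       {v : Fin (n + 1) → R | B.mulVec v = 0} =
          Set.range (fun r : R => fun i : Fin (n + 1) => C i * r) ∧
       {v : Fin (n + 1) → R | ∑ j, A j * v j = 0} =
          Set.range (fun v : Fin (n + 1) → R => B.mulVec v) ∧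
       Function.Surjective (fun v : Fin (n + 1) → R => ∑ j, A j * v j)) := by
  have hAB' : Matrix.vecMul A B = 0 := funext hAB
  have hC_inj : Function.Injective (fun r : R => fun i => C i * r) :=
    fun r s h => hc.mul_left_cancel (congrFun h 0)
  have hA_surj : Function.Surjective (dotProduct A) :=
    fun r => (Matrix.exists_dotProduct_eq_and_vecTail_eq ha r 0).imp fun _ => And.left
  have hexactB := Matrix.ker_mulVec_eq_range_iff_injective_submatrix hAB' hBC ha hc
  have hexactA := Matrix.ker_dotProduct_eq_range_iff_surjective_submatrix hAB' hBC ha hc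
  rw [Matrix.exists_mul_eq_one_and_mul_eq_one_iff_bijective_mulVec]
  exact ⟨fun ⟨hinj, hsurj⟩ => ⟨hC_inj, hexactB.2 hinj, hexactA.2 hsurj, hA_surj⟩,
    fun ⟨_, hB, hA, _⟩ => ⟨hexactB.1 hB, hexactA.1 hA⟩⟩
end

section
/- Let n ≥ 1, let C be an integer, and let A be an n×n matrix over the ring ℤ((t)) of formal Laurent series over ℤ such that for every entry A_{ij} the coefficient of t^d in A_{ij} vanishes for all d < C. Let A' be the n×n integer matrix whose (i,j) entry is the coefficient of t^C in A_{ij}. Assume that A' is nonzero and non-degenerate, meaning that for every n×n integer matrix B, A'·B = 0 implies B = 0. Then A is invertible over ℤ((t)) if and only if A' is invertible over ℤ. -/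
/-!
Factor out `t^C`: the hypothesis on `A` says exactly that `A = t^C • P` for a matrix `P` of
power series whose reduction modulo `t` is `A'`. Since `t^C` is a unit, `A` is invertible iff
`det P` is a unit of `ℤ((t))`. A power series with nonzero constant term that is a unit in
`ℤ((t))` has an inverse of order `0`, hence is a unit in `ℤ⟦t⟧`, i.e. its constant term is a unit.
Non-degeneracy of `A'` gives `constantCoeff (det P) = det A' ≠ 0`, so `A` is invertible iff
`det A'` is a unit.
-/

open HahnSeries PowerSeries

namespace LaurentSeries

variable {R : Type*}

theorem single_mul_coe_mk_coeff_add [Semiring R] (f : LaurentSeries R) (C : ℤ)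
    (hf : ∀ d < C, f.coeff d = 0) :
    single C 1 * ofPowerSeries ℤ R (PowerSeries.mk fun d => f.coeff (C + d)) = f := by
  ext d
  obtain ⟨e, rfl⟩ : ∃ e, d = e + C := ⟨d - C, by ring⟩
  rw [coeff_single_mul_add, one_mul, PowerSeries.coeff_coe]
  split_ifs with he
  · exact (hf _ (by linarith)).symm
  · rw [PowerSeries.coeff_mk, Int.natAbs_of_nonneg (not_lt.mp he), add_comm]

theorem isUnit_single_one [Ring R] (C : ℤ) : IsUnit (single C 1 : LaurentSeries R) :=
  isUnit_iff_exists.mpr ⟨single (-C) 1, by simp [single_mul_single], by simp [single_mul_single]⟩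

theorem coeff_zero_coe [Semiring R] (f : PowerSeries R) :
    (ofPowerSeries ℤ R f).coeff 0 = constantCoeff f := by
  simpa using coeff_coe_powerSeries f 0

theorem order_coe_of_constantCoeff_ne_zero [Semiring R] {f : PowerSeries R}
    (hf : constantCoeff f ≠ 0) : (ofPowerSeries ℤ R f).order = 0 := by
  have hcoeff : (ofPowerSeries ℤ R f).coeff 0 ≠ 0 := by rwa [coeff_zero_coe]
  refine le_antisymm (order_le_of_coeff_ne_zero hcoeff) ?_
  rw [le_order_iff_forall (ne_zero_of_coeff_ne_zero hcoeff)]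
  intro d hd
  rw [PowerSeries.coeff_coe, if_pos hd]

theorem isUnit_coe_iff [CommRing R] [IsDomain R] {f : PowerSeries R}
    (hf : constantCoeff f ≠ 0) : IsUnit (ofPowerSeries ℤ R f) ↔ IsUnit f := by
  refine ⟨fun h => ?_, fun h => h.map _⟩
  obtain ⟨g, hfg⟩ : ∃ g : LaurentSeries R, ofPowerSeries ℤ R f * g = 1 := h.exists_right_inv
  have hg : g ≠ 0 := by rintro rfl; simp at hfg
  have hg_order : g.order = 0 := by
    have := HahnSeries.order_mul (ne_zero_of_coeff_ne_zero (g := 0) (by rwa [coeff_zero_coe])) hg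
    rw [hfg, HahnSeries.order_one, order_coe_of_constantCoeff_ne_zero hf, zero_add] at this
    exact this.symm
  have hg_coe : ofPowerSeries ℤ R g.powerSeriesPart = g := by
    rw [ofPowerSeries_powerSeriesPart, hg_order, neg_zero, single_zero_one, one_mul]
  refine IsUnit.of_mul_eq_one g.powerSeriesPart (ofPowerSeries_injective (Γ := ℤ) ?_)
  rw [map_mul, hg_coe, hfg, map_one]

end LaurentSeries

namespace Matrix

variable {n R : Type*} [Fintype n] [DecidableEq n]

theorem isUnit_smul_iff_of_isUnit [CommRing R] {u : R} (hu : IsUnit u) (M : Matrix n n R) :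
    IsUnit (u • M) ↔ IsUnit M := by
  rw [← hu.unit_spec, ← Units.smul_def, isUnit_smul_iff]

theorem isUnit_map_ofPowerSeries_iff [CommRing R] [IsDomain R] (P : Matrix n n (PowerSeries R))
    (hP : (P.map constantCoeff).det ≠ 0) :
    IsUnit (P.map (ofPowerSeries ℤ R)) ↔ IsUnit (P.map constantCoeff) := by
  have hdet : constantCoeff P.det ≠ 0 := by rwa [RingHom.map_det]
  rw [isUnit_iff_isUnit_det, isUnit_iff_isUnit_det, ← RingHom.mapMatrix_apply, ← RingHom.map_det,
    ← RingHom.mapMatrix_apply, ← RingHom.map_det, LaurentSeries.isUnit_coe_iff hdet,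
    PowerSeries.isUnit_iff_constantCoeff]

end Matrix

theorem matrix_invertible_over_laurentSeries_iff_general (n : ℕ) (C : ℤ)
    (A : Matrix (Fin n) (Fin n) (LaurentSeries ℤ))
    (hlow : ∀ i j, ∀ d < C, (A i j).coeff d = 0)
    (A' : Matrix (Fin n) (Fin n) ℤ)
    (hA' : ∀ i j, A' i j = (A i j).coeff C)
    (hnd : ∀ B : Matrix (Fin n) (Fin n) ℤ, A' * B = 0 → B = 0) :
    (∃ D : Matrix (Fin n) (Fin n) (LaurentSeries ℤ), A * D = 1 ∧ D * A = 1) ↔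
    (∃ D' : Matrix (Fin n) (Fin n) ℤ, A' * D' = 1 ∧ D' * A' = 1) := by
  have hdet : A'.det ≠ 0 := Matrix.nonsingular_iff_det_ne_zero.mp
    (.of_leftRegular (isLeftRegular_iff_right_eq_zero_of_mul.mpr hnd))
  set P : Matrix (Fin n) (Fin n) (PowerSeries ℤ) :=
    Matrix.of fun i j => PowerSeries.mk fun d => (A i j).coeff (C + d)
  have hA : A = (single C 1 : LaurentSeries ℤ) • P.map (ofPowerSeries ℤ ℤ) := by
    ext i j : 1
    exact (LaurentSeries.single_mul_coe_mk_coeff_add _ C (hlow i j)).symm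
  have hP : P.map constantCoeff = A' := by
    ext i j
    simp [P, hA']
  rw [← isUnit_iff_exists, ← isUnit_iff_exists, hA,
    Matrix.isUnit_smul_iff_of_isUnit (LaurentSeries.isUnit_single_one C),
    Matrix.isUnit_map_ofPowerSeries_iff P (hP ▸ hdet), hP]

/-- Lemma 2.5 of the paper in the case `Γ = ℤ`.  Let `n ≥ 1`, `C ∈ ℤ`, and let `A` be an
`n × n` matrix over `ℤ((t))` all of whose entries vanish in degrees `< C`.  Let `A'` be the
integer matrix of coefficients of `t^C`.  If `A'` is nonzero and non-degenerate (i.e. `A'·B = 0`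
implies `B = 0` for integer matrices `B`), then `A` has a two-sided inverse over `ℤ((t))` if
and only if `A'` has a two-sided inverse over `ℤ`. -/
theorem matrix_invertible_over_laurentSeries_iff (n : ℕ) (hn : 1 ≤ n) (C : ℤ)
    (A : Matrix (Fin n) (Fin n) (LaurentSeries ℤ))
    (hlow : ∀ i j, ∀ d < C, (A i j).coeff d = 0)
    (A' : Matrix (Fin n) (Fin n) ℤ)
    (hA' : ∀ i j, A' i j = (A i j).coeff C)
    (hne : A' ≠ 0)
    (hnd : ∀ B : Matrix (Fin n) (Fin n) ℤ, A' * B = 0 → B = 0) :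
    (∃ D : Matrix (Fin n) (Fin n) (LaurentSeries ℤ), A * D = 1 ∧ D * A = 1) ↔
    (∃ D' : Matrix (Fin n) (Fin n) ℤ, A' * D' = 1 ∧ D' * A' = 1) :=
  matrix_invertible_over_laurentSeries_iff_general n C A hlow A' hA' hnd
end

section
/- Let Γ be a group and let φ : Γ → ℚ be a group homomorphism into the additive group of rationals. Assume that the group ring ℤ[Γ] has no zero divisors. For a nonzero element p of ℤ[Γ] with (finite, nonempty) support S ⊆ Γ, define maxdeg_φ(p) = max{φ(g) : g ∈ S} and mindeg_φ(p) = min{φ(g) : g ∈ S}, and deg_φ(p) = maxdeg_φ(p) − mindeg_φ(p). Then for all nonzero p, q in ℤ[Γ] the product p·q is nonzero and satisfies maxdeg_φ(p·q) = maxdeg_φ(p) + maxdeg_φ(q), mindeg_φ(p·q) = mindeg_φ(p) + mindeg_φ(q), and hence deg_φ(p·q) = deg_φ(p) + deg_φ(q). -/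
/-!
Write `A` and `B` for the largest values of `φ` on the supports of `p` and `q`, and `p_A`, `q_B`
for the terms of `p`, `q` on which `φ` takes these values. Every term of `p * q - p_A * q_B`
has `φ`-value `< A + B`, so `p * q` agrees with `p_A * q_B` in `φ`-degree `A + B`. Since the
group ring is a domain, `p_A * q_B ≠ 0`, and all of its terms have degree exactly `A + B`; hence
`maxdeg (p * q) = A + B`. The statement for `mindeg` is the same one for the reversed order.
-/

open Finset

namespace MonoidAlgebra

variable {R G α : Type*} {φ : G → α}

section HomogeneousComponent

variable [DecidableEq α]

variable (φ) in
def homogeneousComponent [Semiring R] (A : α) (p : MonoidAlgebra R G) : MonoidAlgebra R G :=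
  ofCoeff (p.coeff.filter (φ · = A))

lemma mem_support_homogeneousComponent [Semiring R] {A : α} {p : MonoidAlgebra R G} {x : G} :
    x ∈ (homogeneousComponent φ A p).coeff.support ↔ x ∈ p.coeff.support ∧ φ x = A := by
  simp [homogeneousComponent, Finsupp.support_filter]

lemma homogeneousComponent_ne_zero [Semiring R] {p : MonoidAlgebra R G} {x : G}
    (hx : x ∈ p.coeff.support) : homogeneousComponent φ (φ x) p ≠ 0 := by
  intro h
  simpa [h] using (mem_support_homogeneousComponent (φ := φ) (A := φ x)).mpr ⟨hx, rfl⟩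

lemma mem_support_sub_homogeneousComponent [Ring R] {A : α} {p : MonoidAlgebra R G} {x : G} :
    x ∈ (p - homogeneousComponent φ A p).coeff.support ↔ x ∈ p.coeff.support ∧ φ x ≠ A := by
  by_cases hx : φ x = A <;> simp [homogeneousComponent, coeff_sub, hx]

lemma eq_add_of_mem_support_homogeneousComponent_mul [Semiring R] [Mul G] [Add α]
    (hφ : ∀ g h, φ (g * h) = φ g + φ h) {A B : α} {p q : MonoidAlgebra R G} {x : G}
    (hx : x ∈ (homogeneousComponent φ A p * homogeneousComponent φ B q).coeff.support) :
    φ x = A + B := by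
  classical
  obtain ⟨a, ha, b, hb, rfl⟩ := mem_mul.mp (support_coeff_mul_subset _ _ hx)
  rw [hφ, (mem_support_homogeneousComponent.mp ha).2, (mem_support_homogeneousComponent.mp hb).2]

end HomogeneousComponent

section Mul

variable [Mul G]

lemma coeff_mul_eq_zero_of_forall_mul_ne [Semiring R] {p q : MonoidAlgebra R G} {x : G}
    (h : ∀ a ∈ p.coeff.support, ∀ b ∈ q.coeff.support, a * b ≠ x) : (p * q).coeff x = 0 := by
  classical
  refine Finsupp.notMem_support_iff.mp fun hx => ?_
  obtain ⟨a, ha, b, hb, hab⟩ := mem_mul.mp (support_coeff_mul_subset p q hx)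
  exact h a ha b hb hab

variable [LinearOrder α] [AddCommMonoid α]

lemma sup'_support_coeff_mul_le [Semiring R] [IsOrderedAddMonoid α]
    (hφ : ∀ g h, φ (g * h) = φ g + φ h) {p q : MonoidAlgebra R G}
    (hpq : (p * q).coeff.support.Nonempty) (hp : p.coeff.support.Nonempty)
    (hq : q.coeff.support.Nonempty) :
    (p * q).coeff.support.sup' hpq φ ≤ p.coeff.support.sup' hp φ + q.coeff.support.sup' hq φ := by
  classical
  refine sup'_le _ _ fun x hx => ?_
  obtain ⟨a, ha, b, hb, rfl⟩ := mem_mul.mp (support_coeff_mul_subset p q hx)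
  rw [hφ]
  exact add_le_add (le_sup' φ ha) (le_sup' φ hb)

variable [IsOrderedCancelAddMonoid α] [Ring R]

lemma coeff_mul_eq_coeff_homogeneousComponent_mul (hφ : ∀ g h, φ (g * h) = φ g + φ h)
    {A B : α} {p q : MonoidAlgebra R G} (hp : ∀ a ∈ p.coeff.support, φ a ≤ A)
    (hq : ∀ b ∈ q.coeff.support, φ b ≤ B) {x : G} (hx : φ x = A + B) :
    (p * q).coeff x = (homogeneousComponent φ A p * homogeneousComponent φ B q).coeff x := by
  set pA := homogeneousComponent φ A p
  set qB := homogeneousComponent φ B q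
  have hsplit : p * q = pA * qB + pA * (q - qB) + (p - pA) * q := by
    rw [mul_sub, sub_mul]; abel
  have h₁ : (pA * (q - qB)).coeff x = 0 := coeff_mul_eq_zero_of_forall_mul_ne fun a ha b hb hab => by
    obtain ⟨-, hφa⟩ := mem_support_homogeneousComponent.mp ha
    obtain ⟨hb, hφb⟩ := mem_support_sub_homogeneousComponent.mp hb
    rw [← hab, hφ] at hx
    exact (add_lt_add_of_le_of_lt hφa.le (lt_of_le_of_ne (hq b hb) hφb)).ne hx
  have h₂ : ((p - pA) * q).coeff x = 0 := coeff_mul_eq_zero_of_forall_mul_ne fun a ha b hb hab => by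
    obtain ⟨ha, hφa⟩ := mem_support_sub_homogeneousComponent.mp ha
    rw [← hab, hφ] at hx
    exact (add_lt_add_of_lt_of_le (lt_of_le_of_ne (hp a ha) hφa) (hq b hb)).ne hx
  rw [hsplit, coeff_add, coeff_add, Finsupp.add_apply, Finsupp.add_apply, h₁, h₂, add_zero, add_zero]

variable [NoZeroDivisors (MonoidAlgebra R G)]

theorem sup'_support_coeff_mul (hφ : ∀ g h, φ (g * h) = φ g + φ h) {p q : MonoidAlgebra R G}
    (hpq : (p * q).coeff.support.Nonempty) (hp : p.coeff.support.Nonempty)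
    (hq : q.coeff.support.Nonempty) :
    (p * q).coeff.support.sup' hpq φ = p.coeff.support.sup' hp φ + q.coeff.support.sup' hq φ := by
  refine (sup'_support_coeff_mul_le hφ hpq hp hq).antisymm ?_
  obtain ⟨a, ha, hA⟩ := exists_mem_eq_sup' hp φ
  obtain ⟨b, hb, hB⟩ := exists_mem_eq_sup' hq φ
  have hlead : homogeneousComponent φ (φ a) p * homogeneousComponent φ (φ b) q ≠ 0 :=
    mul_ne_zero (homogeneousComponent_ne_zero ha) (homogeneousComponent_ne_zero hb)
  obtain ⟨x, hx⟩ := Finsupp.support_nonempty_iff.mpr (coeff_eq_zero.not.mpr hlead)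
  have hφx : φ x = φ a + φ b := eq_add_of_mem_support_homogeneousComponent_mul hφ hx
  have hpqx : x ∈ (p * q).coeff.support := by
    rw [Finsupp.mem_support_iff, coeff_mul_eq_coeff_homogeneousComponent_mul hφ
      (fun g hg => hA ▸ le_sup' φ hg) (fun g hg => hB ▸ le_sup' φ hg) hφx]
    exact Finsupp.mem_support_iff.mp hx
  rw [hA, hB, ← hφx]
  exact le_sup' φ hpqx

theorem inf'_support_coeff_mul (hφ : ∀ g h, φ (g * h) = φ g + φ h) {p q : MonoidAlgebra R G}
    (hpq : (p * q).coeff.support.Nonempty) (hp : p.coeff.support.Nonempty)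
    (hq : q.coeff.support.Nonempty) :
    (p * q).coeff.support.inf' hpq φ = p.coeff.support.inf' hp φ + q.coeff.support.inf' hq φ :=
  sup'_support_coeff_mul (α := αᵒᵈ) hφ hpq hp hq

end Mul

end MonoidAlgebra

/-- Section 5 of the paper: for a group `Γ` with `ℤ[Γ]` a domain and a homomorphism
`φ : Γ → ℚ`, the functions `maxdeg_φ`, `mindeg_φ` and `deg_φ = maxdeg_φ - mindeg_φ` on
nonzero elements of `ℤ[Γ]` are additive under multiplication; in particular the product of
nonzero elements is nonzero and `deg_φ` is a monoid homomorphism `(ℤ[Γ]∖{0}, ·) → (ℚ≥0, +)`. -/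
theorem deg_mul_of_groupRing_domain (Γ : Type*) [Group Γ] (φ : Γ → ℚ)
    (hφ : ∀ g h : Γ, φ (g * h) = φ g + φ h)
    (hdom : ∀ p q : MonoidAlgebra ℤ Γ, p * q = 0 → p = 0 ∨ q = 0)
    (p q : MonoidAlgebra ℤ Γ) (hp : p ≠ 0) (hq : q ≠ 0) :
    ∃ hpq : p * q ≠ 0,
      ((p * q).coeff.support.sup' (Finsupp.support_nonempty_iff.mpr (mt MonoidAlgebra.coeff_eq_zero.mp hpq)) φ =
          p.coeff.support.sup' (Finsupp.support_nonempty_iff.mpr (mt MonoidAlgebra.coeff_eq_zero.mp hp)) φ +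
          q.coeff.support.sup' (Finsupp.support_nonempty_iff.mpr (mt MonoidAlgebra.coeff_eq_zero.mp hq)) φ) ∧
      ((p * q).coeff.support.inf' (Finsupp.support_nonempty_iff.mpr (mt MonoidAlgebra.coeff_eq_zero.mp hpq)) φ =
          p.coeff.support.inf' (Finsupp.support_nonempty_iff.mpr (mt MonoidAlgebra.coeff_eq_zero.mp hp)) φ +
          q.coeff.support.inf' (Finsupp.support_nonempty_iff.mpr (mt MonoidAlgebra.coeff_eq_zero.mp hq)) φ) ∧
      ((p * q).coeff.support.sup' (Finsupp.support_nonempty_iff.mpr (mt MonoidAlgebra.coeff_eq_zero.mp hpq)) φ -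
          (p * q).coeff.support.inf' (Finsupp.support_nonempty_iff.mpr (mt MonoidAlgebra.coeff_eq_zero.mp hpq)) φ =
        (p.coeff.support.sup' (Finsupp.support_nonempty_iff.mpr (mt MonoidAlgebra.coeff_eq_zero.mp hp)) φ -
          p.coeff.support.inf' (Finsupp.support_nonempty_iff.mpr (mt MonoidAlgebra.coeff_eq_zero.mp hp)) φ) +
        (q.coeff.support.sup' (Finsupp.support_nonempty_iff.mpr (mt MonoidAlgebra.coeff_eq_zero.mp hq)) φ -
          q.coeff.support.inf' (Finsupp.support_nonempty_iff.mpr (mt MonoidAlgebra.coeff_eq_zero.mp hq)) φ)) := by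
  have : NoZeroDivisors (MonoidAlgebra ℤ Γ) := ⟨hdom _ _⟩
  have hpq := mul_ne_zero hp hq
  have hsupp {r : MonoidAlgebra ℤ Γ} (hr : r ≠ 0) : r.coeff.support.Nonempty :=
    Finsupp.support_nonempty_iff.mpr (MonoidAlgebra.coeff_eq_zero.not.mpr hr)
  have hsup := MonoidAlgebra.sup'_support_coeff_mul hφ (hsupp hpq) (hsupp hp) (hsupp hq)
  have hinf := MonoidAlgebra.inf'_support_coeff_mul hφ (hsupp hpq) (hsupp hp) (hsupp hq)
  exact ⟨hpq, hsup, hinf, by rw [hsup, hinf, add_sub_add_comm]⟩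
end

section
/- Let K be a field, let k, l ≥ 0, let A and B be k×(k+l) matrices over K and let C be an l×(k+l) matrix over K. Let M be the (k+l)×(k+l) matrix over the polynomial ring K[X] whose first k rows are the rows of A + X·B and whose last l rows are the rows of C. Assume that det M ≠ 0 and that natDegree(det M) − (the multiplicity of 0 as a root of det M) = k. Then the (k+l)×(k+l) matrix over K obtained by stacking A on top of C is invertible, and the (k+l)×(k+l) matrix over K obtained by stacking B on top of C is invertible. -/
/-!
The rows of `M` coming from `A + X • B` have degree at most one and the rows coming from `C`
are constant, so `det M` has degree at most `k`; its constant coefficient is `det (A; C)` and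
its coefficient of `X ^ k` is `det (B; C)`. A spread of `k` therefore forces `det M` to have
degree exactly `k` and no root at `0`, i.e. both of these coefficients are nonzero.
-/

open Polynomial

namespace Polynomial

theorem coeff_prod_sum_of_natDegree_le {ι R : Type*} [CommSemiring R] (s : Finset ι)
    (f : ι → R[X]) (d : ι → ℕ) (h : ∀ i ∈ s, (f i).natDegree ≤ d i) :
    (∏ i ∈ s, f i).coeff (∑ i ∈ s, d i) = ∏ i ∈ s, (f i).coeff (d i) := by
  induction s using Finset.cons_induction with
  | empty => simp
  | cons a s ha ih =>
    have hs : ∀ i ∈ s, (f i).natDegree ≤ d i := fun i hi => h i (Finset.mem_cons_of_mem hi)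
    rw [Finset.prod_cons, Finset.sum_cons, Finset.prod_cons,
      coeff_mul_add_eq_of_natDegree_le (h a (Finset.mem_cons_self a s))
        ((natDegree_prod_le _ _).trans (Finset.sum_le_sum hs)), ih hs]

theorem rootMultiplicity_le_natDegree {R : Type*} [CommRing R] [IsDomain R] (p : R[X])
    (a : R) : p.rootMultiplicity a ≤ p.natDegree := by
  classical
  rw [← count_roots]
  exact (Multiset.count_le_card _ _).trans (card_roots' p)

theorem coeff_zero_ne_zero_and_coeff_ne_zero_of_spread_eq {R : Type*} [CommRing R] [IsDomain R]
    {p : R[X]} (hp : p ≠ 0) {k : ℕ} (hle : p.natDegree ≤ k)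
    (hspread : p.natDegree - p.rootMultiplicity 0 = k) :
    p.coeff 0 ≠ 0 ∧ p.coeff k ≠ 0 := by
  have hmult := rootMultiplicity_le_natDegree p 0
  have hroot : p.rootMultiplicity 0 = 0 := by omega
  have hdeg : p.natDegree = k := by omega
  refine ⟨fun h0 => ?_, hdeg ▸ leadingCoeff_ne_zero.mpr hp⟩
  rw [rootMultiplicity_eq_zero_iff] at hroot
  exact hp (hroot (by rwa [IsRoot, ← coeff_zero_eq_eval_zero]))

end Polynomial

namespace Matrix

variable {n R : Type*} [Fintype n] [DecidableEq n] [CommRing R]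

theorem natDegree_det_le_of_row_natDegree_le (M : Matrix n n R[X]) (d : n → ℕ)
    (h : ∀ i j, (M i j).natDegree ≤ d i) : M.det.natDegree ≤ ∑ i, d i := by
  rw [det_apply]
  refine natDegree_sum_le_of_forall_le _ _ fun σ _ => (natDegree_smul_le _ _).trans ?_
  calc (∏ i, M (σ i) i).natDegree ≤ ∑ i, d (σ i) :=
        (natDegree_prod_le _ _).trans (Finset.sum_le_sum fun i _ => h (σ i) i)
    _ = ∑ i, d i := Equiv.sum_comp σ d

theorem coeff_det_sum_of_row_natDegree_le (M : Matrix n n R[X]) (d : n → ℕ)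
    (h : ∀ i j, (M i j).natDegree ≤ d i) :
    M.det.coeff (∑ i, d i) = (of fun i j => (M i j).coeff (d i)).det := by
  rw [det_apply, det_apply, finsetSum_coeff]
  refine Finset.sum_congr rfl fun σ _ => ?_
  rw [coeff_smul, ← Equiv.sum_comp σ d,
    coeff_prod_sum_of_natDegree_le _ _ _ fun i _ => h (σ i) i]
  rfl

theorem coeff_zero_det (M : Matrix n n R[X]) :
    M.det.coeff 0 = (M.map fun p => p.coeff 0).det :=
  constantCoeff.map_det M

theorem exists_mul_eq_one_and_mul_eq_one_of_det_ne_zero {n K : Type*} [Fintype n]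
    [DecidableEq n] [Field K] {A : Matrix n n K} (hA : A.det ≠ 0) :
    ∃ D : Matrix n n K, A * D = 1 ∧ D * A = 1 :=
  ⟨A⁻¹, A.mul_nonsing_inv (isUnit_iff_ne_zero.mpr hA),
    A.nonsing_inv_mul (isUnit_iff_ne_zero.mpr hA)⟩

section RowPencil

variable {m n p R : Type*} [CommRing R]

noncomputable def rowPencil (A B : Matrix m n R) (C : Matrix p n R) : Matrix (m ⊕ p) n R[X] :=
  fromRows (of fun i j => Polynomial.C (A i j) + X * Polynomial.C (B i j)) (C.map Polynomial.C)

variable (A B : Matrix m n R) (C : Matrix p n R)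

theorem natDegree_rowPencil_le (i : m ⊕ p) (j : n) :
    (rowPencil A B C i j).natDegree ≤ Sum.elim (fun _ => 1) (fun _ => 0) i := by
  rcases i with i | i
  · simp only [rowPencil, fromRows_apply_inl, of_apply, Sum.elim_inl]
    compute_degree
  · simp [rowPencil]

theorem of_coeff_rowPencil :
    (of fun i j => (rowPencil A B C i j).coeff (Sum.elim (fun _ => 1) (fun _ => 0) i)) =
      fromRows B C := by
  ext (i | i) j <;> simp [rowPencil]

theorem map_coeff_zero_rowPencil : (rowPencil A B C).map (fun q => q.coeff 0) = fromRows A C := by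
  ext (i | i) j <;> simp [rowPencil]

end RowPencil

section SquareRowPencil

variable {m p R : Type*} [CommRing R] [Fintype m] [Fintype p]

private theorem sum_elim_one_zero : ∑ i : m ⊕ p, Sum.elim (fun _ => 1) (fun _ => 0) i =
    Fintype.card m := by
  simp [Fintype.sum_sum_type]

variable [DecidableEq m] [DecidableEq p] (A B : Matrix m (m ⊕ p) R) (C : Matrix p (m ⊕ p) R)

theorem natDegree_det_rowPencil_le : (rowPencil A B C).det.natDegree ≤ Fintype.card m := by
  rw [← sum_elim_one_zero (p := p)]
  exact natDegree_det_le_of_row_natDegree_le _ _ (natDegree_rowPencil_le A B C)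

theorem coeff_card_det_rowPencil :
    (rowPencil A B C).det.coeff (Fintype.card m) = (fromRows B C).det := by
  rw [← sum_elim_one_zero (p := p),
    coeff_det_sum_of_row_natDegree_le _ _ (natDegree_rowPencil_le A B C), of_coeff_rowPencil]

theorem coeff_zero_det_rowPencil : (rowPencil A B C).det.coeff 0 = (fromRows A C).det := by
  rw [coeff_zero_det, map_coeff_zero_rowPencil]

end SquareRowPencil

end Matrix

open Matrix

/-- Lemma 6.3 of the paper in the case of a commutative field `K`.  Let `A`, `B` be
`k × (k+l)` matrices and `C` an `l × (k+l)` matrix over `K`, and let `M` be the square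
matrix over `K[X]` whose first `k` rows are the rows of `A + X·B` and whose last `l` rows
are the rows of `C`.  If `det M ≠ 0` and the spread `natDegree (det M) − rootMultiplicity 0
(det M)` equals `k`, then the matrices `(A; C)` and `(B; C)` are invertible over `K`. -/
theorem stack_invertible_of_det_spread (K : Type*) [Field K] (k l : ℕ)
    (A B : Matrix (Fin k) (Fin k ⊕ Fin l) K) (C : Matrix (Fin l) (Fin k ⊕ Fin l) K)
    (M : Matrix (Fin k ⊕ Fin l) (Fin k ⊕ Fin l) (Polynomial K))
    (hM : M = Matrix.fromRows
        (Matrix.of fun i j => Polynomial.C (A i j) + Polynomial.X * Polynomial.C (B i j))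
        (C.map Polynomial.C))
    (hne : M.det ≠ 0)
    (hdeg : M.det.natDegree - Polynomial.rootMultiplicity 0 M.det = k) :
    (∃ D : Matrix (Fin k ⊕ Fin l) (Fin k ⊕ Fin l) K,
        Matrix.fromRows A C * D = 1 ∧ D * Matrix.fromRows A C = 1) ∧
    (∃ D : Matrix (Fin k ⊕ Fin l) (Fin k ⊕ Fin l) K,
        Matrix.fromRows B C * D = 1 ∧ D * Matrix.fromRows B C = 1) := by
  obtain rfl : M = rowPencil A B C := hM
  have hle := natDegree_det_rowPencil_le A B C
  have hcoeff := coeff_card_det_rowPencil A B C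
  rw [Fintype.card_fin] at hle hcoeff
  obtain ⟨hA, hB⟩ := coeff_zero_ne_zero_and_coeff_ne_zero_of_spread_eq hne hle hdeg
  rw [coeff_zero_det_rowPencil] at hA
  rw [hcoeff] at hB
  exact ⟨exists_mul_eq_one_and_mul_eq_one_of_det_ne_zero hA,
    exists_mul_eq_one_and_mul_eq_one_of_det_ne_zero hB⟩
end
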